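/- Let d : YoungDiagram → ℕ count standard Young tableaux. There exists a probability measure Pl on the path space Ω of the Young graph such that for every n : ℕ and every finite path s of length n ending at the diagram λ = s n, the measure of the cylinder Cyl s equals (d λ : ℝ≥0∞) / n!. (This measure is the Plancherel measure of the infinite symmetric group.) -/

import Mathlib

/-- `CoversBelow μ lam` (written `μ ⋖ lam` informally): `μ ≤ lam` and
`μ.card + 1 = lam.card`. -/
def CoversBelow (μ lam : YoungDiagram) : Prop :=
  μ ≤ lam ∧ μ.card + 1 = lam.card

/-- `d : YoungDiagram → ℕ` counts standard Young tableaux: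
`d ⊥ = 1` and, for every `lam ≠ ⊥`, `d lam` is the sum of `d μ` over the
(finite) set of diagrams `μ` covered by `lam`. -/
def CountsSYT (d : YoungDiagram → ℕ) : Prop :=
  d ⊥ = 1 ∧ ∀ lam : YoungDiagram, lam ≠ ⊥ →
    d lam = ∑ᶠ μ ∈ {μ : YoungDiagram | CoversBelow μ lam}, d μ

open scoped ENNReal

/-- Discrete measurable structure on Young diagrams. -/
instance : MeasurableSpace YoungDiagram := ⊤

/-- A path in the Young graph: an infinite sequence of diagrams starting at `⊥`
in which each diagram is covered by the next one. -/
def IsYoungPath (T : ℕ → YoungDiagram) : Prop :=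
  T 0 = ⊥ ∧ ∀ k : ℕ, CoversBelow (T k) (T (k + 1))

/-- The path space of the Young graph (the space of infinite Young tableaux),
with the σ-algebra induced from the product σ-algebra on `ℕ → YoungDiagram`. -/
abbrev YoungPathSpace : Type := {T : ℕ → YoungDiagram // IsYoungPath T}

/-- A finite path of length `n` in the Young graph. -/
def IsFinPath {n : ℕ} (s : Fin (n + 1) → YoungDiagram) : Prop :=
  s 0 = ⊥ ∧ ∀ k : Fin n, CoversBelow (s k.castSucc) (s k.succ)

/-- The cylinder set of a finite path. -/
def Cyl {n : ℕ} (s : Fin (n + 1) → YoungDiagram) : Set YoungPathSpace :=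
  {T : YoungPathSpace | ∀ k : Fin (n + 1), T.1 (k : ℕ) = s k}

/-!
The up and down operators of the Young graph satisfy `DU - UD = 1`: a diagram has one more
addable than removable corner, and two distinct diagrams covering (resp. covered by) a common
diagram are covered by their join (resp. cover their meet). Applied to `d` this gives
`∑_{Λ ⋗ λ} d Λ = (|λ| + 1) d λ`, which is exactly what makes the following nested subdivision of
`[0, 1)` consistent: at level `n` each path ending at `λ` owns an interval of length `d λ / n!`,
cut into consecutive pieces of lengths `d Λ / (n + 1)!`, one for each `Λ ⋗ λ`. The Plancherel
measure is the image of Lebesgue measure on `[0, 1)` under the map sending `x` to the path whose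
intervals contain `x`.
-/

namespace YoungDiagram

instance : DecidableEq YoungDiagram := fun _ _ => decidable_of_iff _ YoungDiagram.ext_iff.symm

variable {μ ν : YoungDiagram} {i : ℕ}

lemma card_bot : (⊥ : YoungDiagram).card = 0 := by
  simp [YoungDiagram.card]

lemma card_mono (h : μ ≤ ν) : μ.card ≤ ν.card :=
  Finset.card_le_card (cells_subset_iff.mpr h)

lemma eq_of_le_of_card_le (h : μ ≤ ν) (hc : ν.card ≤ μ.card) : μ = ν :=
  YoungDiagram.ext (Finset.eq_of_subset_of_card_le (cells_subset_iff.mpr h) hc)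

lemma card_sup_add_card_inf (μ ν : YoungDiagram) :
    (μ ⊔ ν).card + (μ ⊓ ν).card = μ.card + ν.card := by
  simp only [YoungDiagram.card, cells_sup, cells_inf, Finset.card_union_add_card_inter]

lemma rowLen_eq_of_forall_mem_iff {n : ℕ} (h : ∀ j, (i, j) ∈ μ ↔ j < n) : μ.rowLen i = n :=
  eq_of_forall_lt_iff fun j => by rw [← mem_iff_lt_rowLen, h]

lemma notMem_rowLen (μ : YoungDiagram) (i : ℕ) : (i, μ.rowLen i) ∉ μ := by
  simp [mem_iff_lt_rowLen]

lemma rowLen_pos_iff : 0 < μ.rowLen i ↔ i < μ.colLen 0 := by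
  rw [← mem_iff_lt_colLen, mem_iff_lt_rowLen]

def Addable (μ : YoungDiagram) : ℕ → Prop
  | 0 => True
  | i + 1 => μ.rowLen (i + 1) < μ.rowLen i

def Removable (μ : YoungDiagram) (i : ℕ) : Prop := μ.rowLen (i + 1) < μ.rowLen i

instance (μ : YoungDiagram) (i : ℕ) : Decidable (Addable μ i) := by
  cases i <;> unfold Addable <;> infer_instance

instance (μ : YoungDiagram) (i : ℕ) : Decidable (Removable μ i) := by
  unfold Removable; infer_instance

lemma Addable.le_colLen (h : Addable μ i) : i ≤ μ.colLen 0 := by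
  cases i with
  | zero => exact Nat.zero_le _
  | succ k =>
    exact rowLen_pos_iff.mp (Nat.zero_lt_of_lt (show μ.rowLen (k + 1) < μ.rowLen k from h))

lemma Removable.rowLen_pos (h : Removable μ i) : 0 < μ.rowLen i :=
  Nat.zero_lt_of_lt (show μ.rowLen (i + 1) < μ.rowLen i from h)

lemma Removable.last_mem (h : Removable μ i) : (i, μ.rowLen i - 1) ∈ μ :=
  mem_iff_lt_rowLen.mpr (Nat.sub_lt h.rowLen_pos one_pos)

lemma isLowerSet_insert_rowLen (h : Addable μ i) :
    IsLowerSet (↑(insert (i, μ.rowLen i) μ.cells) : Set (ℕ × ℕ)) := by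
  rintro ⟨c, e⟩ ⟨a, b⟩ hle hm
  obtain ⟨hac, hbe⟩ := Prod.mk_le_mk.mp hle
  simp only [Finset.coe_insert, Set.mem_insert_iff, Finset.mem_coe, mem_cells,
    Prod.mk.injEq] at hm ⊢
  obtain ⟨rfl, rfl⟩ | hm := hm
  · rcases hbe.lt_or_eq with hb | rfl
    · exact .inr (mem_iff_lt_rowLen.mpr (hb.trans_le (μ.rowLen_anti a c hac)))
    rcases hac.lt_or_eq with ha | rfl
    · obtain ⟨k, rfl⟩ : ∃ k, c = k + 1 := ⟨c - 1, by omega⟩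
      exact .inr (mem_iff_lt_rowLen.mpr ((show μ.rowLen (k + 1) < μ.rowLen k from h).trans_le
        (μ.rowLen_anti a k (by omega))))
    · exact .inl ⟨rfl, rfl⟩
  · exact .inr (μ.up_left_mem hac hbe hm)

/-- Junk value `μ` when `¬ Addable μ i`. -/
def addCell (μ : YoungDiagram) (i : ℕ) : YoungDiagram :=
  if h : Addable μ i then ⟨insert (i, μ.rowLen i) μ.cells, isLowerSet_insert_rowLen h⟩ else μ

lemma cells_addCell (h : Addable μ i) :
    (μ.addCell i).cells = insert (i, μ.rowLen i) μ.cells := by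
  rw [addCell, dif_pos h]

lemma mem_addCell (h : Addable μ i) {c : ℕ × ℕ} :
    c ∈ μ.addCell i ↔ c = (i, μ.rowLen i) ∨ c ∈ μ := by
  rw [← mem_cells, cells_addCell h, Finset.mem_insert, mem_cells]

lemma rowLen_addCell (h : Addable μ i) (a : ℕ) :
    (μ.addCell i).rowLen a = if a = i then μ.rowLen i + 1 else μ.rowLen a := by
  refine rowLen_eq_of_forall_mem_iff fun j => ?_
  rw [mem_addCell h, mem_iff_lt_rowLen, Prod.mk.injEq]
  split_ifs with ha <;> [subst ha; skip] <;> omega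

lemma coversBelow_addCell (h : Addable μ i) : CoversBelow μ (μ.addCell i) := by
  have := Finset.exists_eq_insert_iff.mp ⟨_, (mem_cells _).not.mpr (μ.notMem_rowLen i),
    (cells_addCell h).symm⟩
  exact ⟨cells_subset_iff.mp this.1, this.2⟩

lemma Addable.removable_addCell (h : Addable μ i) : Removable (μ.addCell i) i := by
  unfold Removable
  rw [rowLen_addCell h, rowLen_addCell h, if_neg (by omega), if_pos rfl]
  exact Nat.lt_succ_of_le (μ.rowLen_anti _ _ (Nat.le_succ i))

lemma coversBelow_iff_exists_addCell :
    CoversBelow μ ν ↔ ∃ i, Addable μ i ∧ ν = μ.addCell i := by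
  refine ⟨fun h => ?_, fun ⟨i, hi, hν⟩ => hν ▸ coversBelow_addCell hi⟩
  obtain ⟨⟨i, j⟩, hc, hins⟩ :=
    Finset.exists_eq_insert_iff.mpr ⟨cells_subset_iff.mpr h.1, h.2⟩
  rw [mem_cells] at hc
  have hν : ∀ c, c ∈ ν ↔ c = (i, j) ∨ c ∈ μ := fun c => by
    rw [← mem_cells, ← hins, Finset.mem_insert, mem_cells]
  have hij : (i, j) ∈ ν := (hν _).mpr (.inl rfl)
  -- otherwise `(i, μ.rowLen i)` would be a second cell of `ν` outside `μ`
  have hj : j = μ.rowLen i := by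
    refine le_antisymm ?_ (not_lt.mp (mt mem_iff_lt_rowLen.mpr hc))
    by_contra! hlt
    have := (hν _).mp (ν.up_left_mem le_rfl hlt.le hij)
    simp only [Prod.mk.injEq, true_and, μ.notMem_rowLen i, or_false] at this
    omega
  subst hj
  have hadd : Addable μ i := by
    cases i with
    | zero => trivial
    | succ k =>
      have := (hν _).mp (ν.up_left_mem (Nat.le_succ k) le_rfl hij)
      simp only [Prod.mk.injEq, mem_iff_lt_rowLen] at this
      exact this.resolve_left fun h => by omega
  exact ⟨i, hadd, YoungDiagram.ext (by rw [cells_addCell hadd, hins])⟩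

lemma isLowerSet_erase_rowLen (h : Removable μ i) :
    IsLowerSet (↑(μ.cells.erase (i, μ.rowLen i - 1)) : Set (ℕ × ℕ)) := by
  rintro ⟨c, e⟩ ⟨a, b⟩ hle hm
  obtain ⟨hac, hbe⟩ := Prod.mk_le_mk.mp hle
  simp only [Finset.coe_erase, Set.mem_sdiff, Finset.mem_coe, mem_cells,
    Set.mem_singleton_iff, Prod.mk.injEq, not_and] at hm ⊢
  refine ⟨μ.up_left_mem hac hbe hm.1, fun ha hb => ?_⟩
  subst ha hb
  have hce := mem_iff_lt_rowLen.mp hm.1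
  rcases hac.lt_or_eq with hc | rfl
  · have := μ.rowLen_anti (a + 1) c hc
    have : μ.rowLen (a + 1) < μ.rowLen a := h
    omega
  · exact hm.2 rfl (by omega)

/-- Junk value `μ` when `¬ Removable μ i`. -/
def removeCell (μ : YoungDiagram) (i : ℕ) : YoungDiagram :=
  if h : Removable μ i then ⟨μ.cells.erase (i, μ.rowLen i - 1), isLowerSet_erase_rowLen h⟩
  else μ

lemma cells_removeCell (h : Removable μ i) :
    (μ.removeCell i).cells = μ.cells.erase (i, μ.rowLen i - 1) := by
  rw [removeCell, dif_pos h]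

lemma coversBelow_removeCell (h : Removable μ i) : CoversBelow (μ.removeCell i) μ := by
  refine ⟨cells_subset_iff.mp ?_, ?_⟩
  · rw [cells_removeCell h]
    exact Finset.erase_subset _ _
  · rw [YoungDiagram.card, YoungDiagram.card, cells_removeCell h,
      Finset.card_erase_add_one ((mem_cells _).mpr h.last_mem)]

lemma coversBelow_iff_exists_removeCell :
    CoversBelow μ ν ↔ ∃ i, Removable ν i ∧ μ = ν.removeCell i := by
  refine ⟨fun h => ?_, fun ⟨i, hi, hμ⟩ => hμ ▸ coversBelow_removeCell hi⟩
  obtain ⟨i, hi, rfl⟩ := coversBelow_iff_exists_addCell.mp h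
  refine ⟨i, hi.removable_addCell, YoungDiagram.ext ?_⟩
  rw [cells_removeCell hi.removable_addCell, rowLen_addCell hi, if_pos rfl,
    Nat.add_sub_cancel, cells_addCell hi,
    Finset.erase_insert ((mem_cells _).not.mpr (μ.notMem_rowLen i))]

lemma addCell_injOn : Set.InjOn μ.addCell {i | Addable μ i} := by
  intro i hi j hj hij
  have := (mem_addCell (μ := μ) hi).mpr (.inl rfl)
  rw [hij, mem_addCell hj] at this
  exact congrArg Prod.fst (this.resolve_right (μ.notMem_rowLen i))

lemma removeCell_injOn : Set.InjOn μ.removeCell {i | Removable μ i} := by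
  intro i hi j hj hij
  by_contra hne
  have := congrArg (fun ν : YoungDiagram => (i, μ.rowLen i - 1) ∈ ν.cells) hij
  simp [cells_removeCell hi, cells_removeCell hj, hi.last_mem, hne] at this

def upCovers (μ : YoungDiagram) : Finset YoungDiagram :=
  {i ∈ Finset.range (μ.colLen 0 + 1) | Addable μ i}.image μ.addCell

def downCovers (μ : YoungDiagram) : Finset YoungDiagram :=
  {i ∈ Finset.range (μ.colLen 0) | Removable μ i}.image μ.removeCell

lemma mem_upCovers : ν ∈ μ.upCovers ↔ CoversBelow μ ν := by
  simp only [upCovers, Finset.mem_image, Finset.mem_filter, Finset.mem_range,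
    coversBelow_iff_exists_addCell]
  exact ⟨fun ⟨i, ⟨_, hi⟩, h⟩ => ⟨i, hi, h.symm⟩,
    fun ⟨i, hi, h⟩ => ⟨i, ⟨Nat.lt_succ_of_le hi.le_colLen, hi⟩, h.symm⟩⟩

lemma mem_downCovers : ν ∈ μ.downCovers ↔ CoversBelow ν μ := by
  simp only [downCovers, Finset.mem_image, Finset.mem_filter, Finset.mem_range,
    coversBelow_iff_exists_removeCell]
  exact ⟨fun ⟨i, ⟨_, hi⟩, h⟩ => ⟨i, hi, h.symm⟩,
    fun ⟨i, hi, h⟩ => ⟨i, ⟨rowLen_pos_iff.mp hi.rowLen_pos, hi⟩, h.symm⟩⟩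

/-- A diagram has one more outer corner than inner corners: row `0` is always addable, and row
`i + 1` is addable exactly when row `i` is removable. -/
lemma card_upCovers (μ : YoungDiagram) : μ.upCovers.card = μ.downCovers.card + 1 := by
  rw [upCovers, downCovers, Finset.card_image_of_injOn, Finset.card_image_of_injOn]
  · rw [Finset.range_add_one', Finset.filter_insert, if_pos (show Addable μ 0 from trivial),
      Finset.filter_map, Finset.card_insert_of_notMem (by simp), Finset.card_map]
    rfl
  · exact removeCell_injOn.mono fun i hi => (Finset.mem_filter.mp hi).2
  · exact addCell_injOn.mono fun i hi => (Finset.mem_filter.mp hi).2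

end YoungDiagram

open YoungDiagram

namespace CoversBelow

variable {μ lam Λ ρ : YoungDiagram}

lemma card_eq (h : CoversBelow μ lam) : lam.card = μ.card + 1 := h.2.symm

lemma ne_bot (h : CoversBelow μ lam) : lam ≠ ⊥ := by
  rintro rfl
  have := h.2
  rw [card_bot] at this
  omega

lemma sup_eq (h₁ : CoversBelow lam Λ) (h₂ : CoversBelow μ Λ) (hne : μ ≠ lam) :
    Λ = lam ⊔ μ ∧ CoversBelow (lam ⊓ μ) lam ∧ CoversBelow (lam ⊓ μ) μ := by
  obtain ⟨hlΛ, hlc⟩ := h₁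
  obtain ⟨hμΛ, hμc⟩ := h₂
  have hsup : lam ⊔ μ ≤ Λ := sup_le hlΛ hμΛ
  have hlt : lam.card < (lam ⊔ μ).card := by
    by_contra! hle
    exact hne ((eq_of_le_of_card_le le_sup_right (by omega)).trans
      (eq_of_le_of_card_le le_sup_left hle).symm)
  have hΛ : lam ⊔ μ = Λ := eq_of_le_of_card_le hsup (by have := card_mono hsup; omega)
  have := card_sup_add_card_inf lam μ
  rw [hΛ] at this
  exact ⟨hΛ.symm, ⟨inf_le_left, by omega⟩, ⟨inf_le_right, by omega⟩⟩

lemma inf_eq (h₁ : CoversBelow ρ lam) (h₂ : CoversBelow ρ μ) (hne : μ ≠ lam) :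
    ρ = lam ⊓ μ ∧ CoversBelow lam (lam ⊔ μ) ∧ CoversBelow μ (lam ⊔ μ) := by
  obtain ⟨hρl, hlc⟩ := h₁
  obtain ⟨hρμ, hμc⟩ := h₂
  have hinf : ρ ≤ lam ⊓ μ := le_inf hρl hρμ
  have hlt : (lam ⊓ μ).card < lam.card := by
    by_contra! hle
    exact hne ((eq_of_le_of_card_le inf_le_right (by omega)).symm.trans
      (eq_of_le_of_card_le inf_le_left hle))
  have hρ : ρ = lam ⊓ μ := eq_of_le_of_card_le hinf (by have := card_mono hinf; omega)
  have := card_sup_add_card_inf lam μ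
  rw [← hρ] at this
  exact ⟨hρ, ⟨le_sup_left, by omega⟩, ⟨le_sup_right, by omega⟩⟩

end CoversBelow

namespace YoungDiagram

lemma downCovers_bot : (⊥ : YoungDiagram).downCovers = ∅ :=
  Finset.eq_empty_of_forall_notMem fun _ hμ => (mem_downCovers.mp hμ).ne_bot rfl

/-- Pairs `lam ⋖ Λ ⋗ μ` and `lam ⋗ ρ ⋖ μ` with `μ ≠ lam` correspond via `Λ = lam ⊔ μ` and
`ρ = lam ⊓ μ`. -/
lemma sum_upCovers_sum_downCovers_erase {M : Type*} [AddCommMonoid M] (f : YoungDiagram → M)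
    (lam : YoungDiagram) :
    ∑ Λ ∈ lam.upCovers, ∑ μ ∈ Λ.downCovers.erase lam, f μ =
      ∑ ρ ∈ lam.downCovers, ∑ μ ∈ ρ.upCovers.erase lam, f μ := by
  rw [Finset.sum_sigma', Finset.sum_sigma']
  refine Finset.sum_bij' (fun p _ => ⟨lam ⊓ p.2, p.2⟩) (fun p _ => ⟨lam ⊔ p.2, p.2⟩)
    ?_ ?_ ?_ ?_ (fun _ _ => rfl)
  all_goals
    rintro ⟨κ, μ⟩ hp
    simp only [Finset.mem_sigma, Finset.mem_erase, mem_upCovers, mem_downCovers] at hp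
  · obtain ⟨-, hl, hμ⟩ := CoversBelow.sup_eq hp.1 hp.2.2 hp.2.1
    simpa [mem_upCovers, mem_downCovers, hp.2.1] using ⟨hl, hμ⟩
  · obtain ⟨-, hl, hμ⟩ := CoversBelow.inf_eq hp.1 hp.2.2 hp.2.1
    simpa [mem_upCovers, mem_downCovers, hp.2.1] using ⟨hl, hμ⟩
  · rw [← (CoversBelow.sup_eq hp.1 hp.2.2 hp.2.1).1]
  · rw [← (CoversBelow.inf_eq hp.1 hp.2.2 hp.2.1).1]

end YoungDiagram

namespace CountsSYT

variable {d : YoungDiagram → ℕ}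

lemma eq_sum_downCovers (hd : CountsSYT d) {lam : YoungDiagram} (h : lam ≠ ⊥) :
    d lam = ∑ μ ∈ lam.downCovers, d μ := by
  have : {μ | CoversBelow μ lam} = ↑lam.downCovers := by
    ext μ
    simp [mem_downCovers]
  rw [hd.2 lam h, this, finsum_mem_coe_finset]

/-- The commutation relation `DU - UD = 1` of the up and down operators of the Young graph,
evaluated on `d`. -/
theorem sum_upCovers (hd : CountsSYT d) (lam : YoungDiagram) :
    ∑ Λ ∈ lam.upCovers, d Λ = (lam.card + 1) * d lam := by
  induction hn : lam.card using Nat.strong_induction_on generalizing lam with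
  | _ n ih =>
  have hdown : ∑ ρ ∈ lam.downCovers, ∑ μ ∈ ρ.upCovers, d μ = n * d lam := by
    rcases eq_or_ne lam ⊥ with rfl | hbot
    · simp [downCovers_bot, ← hn, card_bot]
    rw [hd.eq_sum_downCovers hbot, Finset.mul_sum]
    refine Finset.sum_congr rfl fun ρ hρ => ?_
    have hcard := (mem_downCovers.mp hρ).2
    rw [ih ρ.card (by omega) ρ rfl]
    congr 1
    omega
  calc ∑ Λ ∈ lam.upCovers, d Λ
      = ∑ Λ ∈ lam.upCovers, (d lam + ∑ μ ∈ Λ.downCovers.erase lam, d μ) :=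
        Finset.sum_congr rfl fun Λ hΛ => by
          rw [hd.eq_sum_downCovers (mem_upCovers.mp hΛ).ne_bot,
            Finset.add_sum_erase _ _ (mem_downCovers.mpr (mem_upCovers.mp hΛ))]
    _ = d lam + ∑ ρ ∈ lam.downCovers, (d lam + ∑ μ ∈ ρ.upCovers.erase lam, d μ) := by
        rw [Finset.sum_add_distrib, Finset.sum_add_distrib, sum_upCovers_sum_downCovers_erase,
          Finset.sum_const, Finset.sum_const, card_upCovers]
        ring
    _ = d lam + ∑ ρ ∈ lam.downCovers, ∑ μ ∈ ρ.upCovers, d μ := by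
        congr 1
        exact Finset.sum_congr rfl fun ρ hρ =>
          Finset.add_sum_erase _ _ (mem_upCovers.mpr (mem_downCovers.mp hρ))
    _ = (n + 1) * d lam := by
        rw [hdown]
        ring

end CountsSYT

namespace Finset

open Encodable

variable {α : Type*} [Encodable α] (t : Finset α) (w : α → ℕ) {a b : α} {v : ℝ}

def weightBefore (a : α) : ℕ := ∑ b ∈ t with encode b < encode a, w b

def slot (a : α) : Set ℝ := Set.Ico (t.weightBefore w a : ℝ) (t.weightBefore w a + w a)

lemma weightBefore_add_self (ha : a ∈ t) :
    t.weightBefore w a + w a = ∑ b ∈ t with encode b ≤ encode a, w b := by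
  classical
  have : {b ∈ t | encode b ≤ encode a} = insert a {b ∈ t | encode b < encode a} := by
    ext b
    simp only [mem_filter, mem_insert, le_iff_lt_or_eq, encode_inj]
    constructor
    · rintro ⟨hb, hlt | rfl⟩
      exacts [.inr ⟨hb, hlt⟩, .inl rfl]
    · rintro (rfl | ⟨hb, hlt⟩)
      exacts [⟨ha, .inr rfl⟩, ⟨hb, .inl hlt⟩]
  rw [this, sum_insert (by simp), add_comm, weightBefore]

lemma weightBefore_add_le_sum (ha : a ∈ t) : t.weightBefore w a + w a ≤ ∑ b ∈ t, w b := by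
  rw [weightBefore_add_self t w ha]
  exact sum_le_sum_of_subset (filter_subset _ _)

lemma weightBefore_add_le_of_lt (ha : a ∈ t) (h : encode a < encode b) :
    t.weightBefore w a + w a ≤ t.weightBefore w b := by
  rw [weightBefore_add_self t w ha]
  exact sum_le_sum_of_subset fun x hx => by
    simp only [mem_filter] at hx ⊢
    exact ⟨hx.1, hx.2.trans_lt h⟩

lemma eq_of_mem_slot (ha : a ∈ t) (hb : b ∈ t) (hva : v ∈ t.slot w a) (hvb : v ∈ t.slot w b) :
    a = b := by
  by_contra hne
  wlog h : encode a < encode b generalizing a b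
  · exact this hb ha hvb hva (Ne.symm hne)
      ((not_lt.mp h).lt_of_ne (encode_injective.ne (Ne.symm hne)))
  have : (t.weightBefore w a + w a : ℝ) ≤ t.weightBefore w b := by
    exact_mod_cast weightBefore_add_le_of_lt t w ha h
  simp only [slot, Set.mem_Ico] at hva hvb
  linarith

lemma exists_mem_slot (hv₀ : 0 ≤ v) (hv : v < ∑ b ∈ t, w b) : ∃ a ∈ t, v ∈ t.slot w a := by
  classical
  revert hv
  refine Finset.induction_on_max_value encode t (fun hv => ?_) fun a s has hmax ih hv => ?_
  · simp only [sum_empty, CharP.cast_eq_zero] at hv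
    linarith
  · have hbefore : ∀ x ∈ s, (insert a s).weightBefore w x = s.weightBefore w x := fun x hx => by
      rw [weightBefore, filter_insert, if_neg (not_lt.mpr (hmax x hx)), weightBefore]
    have hlast : (insert a s).weightBefore w a = ∑ b ∈ s, w b := by
      rw [weightBefore, filter_insert, if_neg (lt_irrefl _), filter_true_of_mem fun x hx =>
        (hmax x hx).lt_of_ne (encode_injective.ne (ne_of_mem_of_not_mem hx has))]
    rw [sum_insert has, Nat.cast_add, add_comm] at hv
    by_cases h : v < (∑ b ∈ s, w b : ℕ)
    · obtain ⟨x, hx, hvx⟩ := ih h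
      exact ⟨x, mem_insert_of_mem hx, by rwa [slot, hbefore x hx]⟩
    · refine ⟨a, mem_insert_self a s, ?_⟩
      rw [slot, hlast, Set.mem_Ico]
      exact ⟨not_lt.mp h, hv⟩

open Classical in
noncomputable def slotIndex (a₀ : α) (v : ℝ) : α :=
  if h : ∃ a ∈ t, v ∈ t.slot w a then h.choose else a₀

lemma slotIndex_of_mem_slot (a₀ : α) (ha : a ∈ t) (hv : v ∈ t.slot w a) :
    t.slotIndex w a₀ v = a := by
  have h : ∃ a ∈ t, v ∈ t.slot w a := ⟨a, ha, hv⟩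
  rw [slotIndex, dif_pos h]
  exact eq_of_mem_slot t w h.choose_spec.1 ha h.choose_spec.2 hv

lemma slotIndex_of_forall_notMem_slot (a₀ : α) (hv : ∀ a ∈ t, v ∉ t.slot w a) :
    t.slotIndex w a₀ v = a₀ := by
  rw [slotIndex, dif_neg (by simpa using hv)]

lemma slotIndex_mem {a₀ : α} (h₀ : a₀ ∈ t) (v : ℝ) : t.slotIndex w a₀ v ∈ t := by
  by_cases h : ∃ a ∈ t, v ∈ t.slot w a
  · obtain ⟨a, ha, hva⟩ := h
    rwa [slotIndex_of_mem_slot t w a₀ ha hva]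
  · rwa [slotIndex_of_forall_notMem_slot t w a₀ (by simpa using h)]

lemma slotIndex_eq_iff (a₀ : α) (ha : a ∈ t) (hv₀ : 0 ≤ v) (hv : v < ∑ b ∈ t, w b) :
    t.slotIndex w a₀ v = a ↔ v ∈ t.slot w a := by
  refine ⟨fun h => ?_, slotIndex_of_mem_slot t w a₀ ha⟩
  obtain ⟨b, hb, hvb⟩ := t.exists_mem_slot w hv₀ hv
  rwa [← h, slotIndex_of_mem_slot t w a₀ hb hvb]

lemma measurable_slotIndex [MeasurableSpace α] (a₀ : α) : Measurable (t.slotIndex w a₀) := by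
  refine measurable_to_countable' fun a => ?_
  have : t.slotIndex w a₀ ⁻¹' {a} =
      {_v | a ∈ t} ∩ t.slot w a ∪ {_v | a = a₀} ∩ ⋂ b ∈ t, (t.slot w b)ᶜ := by
    ext v
    simp only [Set.mem_preimage, Set.mem_singleton_iff, Set.mem_union, Set.mem_inter_iff,
      Set.mem_ofPred_eq, Set.mem_iInter, Set.mem_compl_iff]
    by_cases h : ∃ b ∈ t, v ∈ t.slot w b
    · obtain ⟨b, hb, hvb⟩ := h
      rw [slotIndex_of_mem_slot t w a₀ hb hvb]
      constructor
      · rintro rfl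
        exact .inl ⟨hb, hvb⟩
      · rintro (⟨ha, hva⟩ | ⟨-, hno⟩)
        exacts [eq_of_mem_slot t w hb ha hvb hva, absurd hvb (hno b hb)]
    · simp only [not_exists, not_and] at h
      rw [slotIndex_of_forall_notMem_slot t w a₀ h]
      constructor
      · rintro rfl
        exact .inr ⟨rfl, h⟩
      · rintro (⟨ha, hva⟩ | ⟨rfl, -⟩)
        exacts [absurd hva (h a ha), rfl]
  rw [this]
  exact ((MeasurableSet.const _).inter measurableSet_Ico).union
    ((MeasurableSet.const _).inter (t.measurableSet_biInter fun _ _ => measurableSet_Ico.compl))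

end Finset

noncomputable instance : Encodable YoungDiagram :=
  Encodable.ofInj YoungDiagram.cells fun _ _ => YoungDiagram.ext

instance : DiscreteMeasurableSpace YoungDiagram := ⟨fun _ => MeasurableSpace.measurableSet_top⟩

namespace IsFinPath

variable {n : ℕ}

lemma init {s : Fin (n + 2) → YoungDiagram} (hs : IsFinPath s) : IsFinPath (Fin.init s) :=
  ⟨hs.1, fun k => hs.2 k.castSucc⟩

lemma coversBelow_last {s : Fin (n + 2) → YoungDiagram} (hs : IsFinPath s) :
    CoversBelow (Fin.init s (Fin.last n)) (s (Fin.last (n + 1))) := by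
  have := hs.2 (Fin.last n)
  rwa [Fin.succ_last] at this

lemma card_last {s : Fin (n + 1) → YoungDiagram} (hs : IsFinPath s) :
    (s (Fin.last n)).card = n := by
  induction n with
  | zero => exact (congrArg YoungDiagram.card hs.1).trans card_bot
  | succ n ih => rw [hs.coversBelow_last.card_eq, ih hs.init]

end IsFinPath

lemma setOf_sub_mul_mem_Ico {a c D : ℝ} (hc : 0 < c) :
    {x : ℝ | (x - a) * c ∈ Set.Ico 0 D} = Set.Ico a (a + D / c) := by
  ext x
  simp only [Set.mem_ofPred_eq, Set.mem_Ico, mul_nonneg_iff_of_pos_right hc, sub_nonneg,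
    ← lt_div_iff₀ hc, sub_lt_iff_lt_add']

lemma mem_Ico_of_mul_sub_mem_Ico {c u L w D : ℝ} (hc : 0 < c) (hL : 0 ≤ L) (hLw : L + w ≤ c * D)
    (h : c * u - L ∈ Set.Ico 0 w) : u ∈ Set.Ico 0 D := by
  obtain ⟨h₁, h₂⟩ := h
  exact ⟨le_of_mul_le_mul_left (by linarith) hc, lt_of_mul_lt_mul_left (by linarith) hc.le⟩

open Nat in
lemma sub_add_div_mul_factorial_succ {x a L : ℝ} (n : ℕ) :
    (x - (a + L / (n + 1)!)) * (n + 1)! = (n + 1) * ((x - a) * n !) - L := by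
  push_cast [Nat.factorial_succ]
  field_simp
  ring

namespace Plancherel

open YoungDiagram Finset Nat

variable (d : YoungDiagram → ℕ)

/-- One step of the subdivision process, in renormalised coordinates: from `(lam, u)` with
`u ∈ [0, d lam)`, the interval `[0, (lam.card + 1) * d lam)` is cut into consecutive slots of
lengths `d Λ`, one for each `Λ` covering `lam`; the step moves to the `Λ` whose slot contains
`(lam.card + 1) * u`, and to the position of that point inside the slot. -/
noncomputable def step (p : YoungDiagram × ℝ) : YoungDiagram × ℝ :=
  let v := (p.1.card + 1 : ℝ) * p.2
  let Λ := p.1.upCovers.slotIndex d (p.1.addCell 0) v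
  (Λ, v - p.1.upCovers.weightBefore d Λ)

noncomputable def walk (x : ℝ) (n : ℕ) : YoungDiagram × ℝ := (step d)^[n] (⊥, x)

lemma walk_zero (x : ℝ) : walk d x 0 = (⊥, x) := rfl

lemma walk_succ (x : ℝ) (n : ℕ) : walk d x (n + 1) = step d (walk d x n) :=
  Function.iterate_succ_apply' _ _ _

lemma step_snd (p : YoungDiagram × ℝ) :
    (step d p).2 = (p.1.card + 1) * p.2 - p.1.upCovers.weightBefore d (step d p).1 :=
  rfl

lemma coversBelow_step (p : YoungDiagram × ℝ) : CoversBelow p.1 (step d p).1 :=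
  mem_upCovers.mp (slotIndex_mem _ _ (mem_upCovers.mpr (coversBelow_addCell (i := 0) trivial)) _)

lemma isYoungPath_walk (x : ℝ) : IsYoungPath fun n => (walk d x n).1 :=
  ⟨rfl, fun n => by
    change CoversBelow (walk d x n).1 (walk d x (n + 1)).1
    rw [walk_succ]
    exact coversBelow_step d _⟩

lemma measurable_step : Measurable (step d) := by
  refine measurable_from_prod_countable_right fun lam => ?_
  have hΛ := (lam.upCovers.measurable_slotIndex d (lam.addCell 0)).comp
    (measurable_const_mul ((lam.card + 1 : ℝ)))
  refine hΛ.prodMk ((measurable_const_mul ((lam.card + 1 : ℝ))).sub ?_)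
  exact (Measurable.of_discrete (f := fun Λ => (lam.upCovers.weightBefore d Λ : ℝ))).comp hΛ

lemma measurable_walk (n : ℕ) : Measurable fun x => walk d x n :=
  ((measurable_step d).iterate n).comp (measurable_const.prodMk measurable_id)

variable {d}

lemma step_fst_eq_iff (hd : CountsSYT d) {lam Λ : YoungDiagram} {u : ℝ}
    (hu : u ∈ Set.Ico 0 (d lam : ℝ)) (hΛ : CoversBelow lam Λ) :
    (step d (lam, u)).1 = Λ ↔
      (lam.card + 1) * u - lam.upCovers.weightBefore d Λ ∈ Set.Ico 0 (d Λ : ℝ) := by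
  refine (slotIndex_eq_iff _ _ _ (mem_upCovers.mpr hΛ) (by have := hu.1; positivity) ?_).trans ?_
  · rw [hd.sum_upCovers, Nat.cast_mul]
    push_cast
    exact mul_lt_mul_of_pos_left hu.2 (by positivity)
  · rw [slot, Set.mem_Ico, Set.mem_Ico, sub_nonneg, sub_lt_iff_lt_add']

variable (d) in
/-- `a` is the left end of the interval of starting points whose walk follows `s`; the walk
then reaches position `(x - a) * n!` at time `n`. -/
def IsLeftEnd {n : ℕ} (s : Fin (n + 1) → YoungDiagram) (a : ℝ) : Prop :=
  (∀ x, (x ∈ Set.Ico 0 1 ∧ ∀ k : Fin (n + 1), (walk d x k).1 = s k) ↔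
    (x - a) * n ! ∈ Set.Ico 0 (d (s (Fin.last n)) : ℝ)) ∧
  ∀ x, (x - a) * n ! ∈ Set.Ico 0 (d (s (Fin.last n)) : ℝ) → (walk d x n).2 = (x - a) * n !

lemma isLeftEnd_zero (hd : CountsSYT d) {s : Fin 1 → YoungDiagram} (hs : IsFinPath s) :
    IsLeftEnd d s 0 := by
  refine ⟨fun x => ?_, fun x _ => by simp [walk_zero]⟩
  simp [Fin.forall_fin_one, walk_zero, hs.1, hd.1]

lemma IsLeftEnd.succ (hd : CountsSYT d) {n : ℕ} {s : Fin (n + 2) → YoungDiagram}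
    (hs : IsFinPath s) {a : ℝ} (h : IsLeftEnd d (Fin.init s) a) :
    IsLeftEnd d s (a + (Fin.init s (Fin.last n)).upCovers.weightBefore d (s (Fin.last (n + 1))) /
      (n + 1)!) := by
  set lam := Fin.init s (Fin.last n)
  set Λ := s (Fin.last (n + 1))
  set L := lam.upCovers.weightBefore d Λ
  set a' := a + L / (n + 1)! with ha'
  have hshift (x : ℝ) : (x - a') * (n + 1)! = (lam.card + 1) * ((x - a) * n !) - L := by
    rw [ha', hs.init.card_last]
    exact sub_add_div_mul_factorial_succ n
  have hnext (x : ℝ) (hu : (x - a) * n ! ∈ Set.Ico 0 (d lam : ℝ)) :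
      ((walk d x (n + 1)).1 = Λ ↔ (x - a') * (n + 1)! ∈ Set.Ico 0 (d Λ : ℝ)) ∧
      ((walk d x (n + 1)).1 = Λ → (walk d x (n + 1)).2 = (x - a') * (n + 1)!) := by
    have hwalk : walk d x n = (lam, (x - a) * n !) :=
      Prod.ext (((h.1 x).mpr hu).2 (Fin.last n)) (h.2 x hu)
    rw [walk_succ, hwalk, hshift]
    exact ⟨step_fst_eq_iff hd hu hs.coversBelow_last, fun hΛ => by rw [step_snd, hΛ]⟩
  -- the slot of `Λ` lies in `[0, (lam.card + 1) * d lam)` by `CountsSYT.sum_upCovers`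
  have hprev (x : ℝ) (hy : (x - a') * (n + 1)! ∈ Set.Ico 0 (d Λ : ℝ)) :
      (x - a) * n ! ∈ Set.Ico 0 (d lam : ℝ) := by
    refine mem_Ico_of_mul_sub_mem_Ico (by positivity) L.cast_nonneg ?_ (hshift x ▸ hy)
    have := lam.upCovers.weightBefore_add_le_sum d (mem_upCovers.mpr hs.coversBelow_last)
    rw [hd.sum_upCovers] at this
    exact_mod_cast this
  refine ⟨fun x => ⟨fun ⟨hx, hpre⟩ => ?_, fun hy => ?_⟩,
    fun x hy => (hnext x (hprev x hy)).2 ((hnext x (hprev x hy)).1.mpr hy)⟩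
  · rw [Fin.forall_fin_succ'] at hpre
    exact (hnext x ((h.1 x).mp ⟨hx, hpre.1⟩)).1.mp hpre.2
  · obtain ⟨hx, hpre⟩ := (h.1 x).mpr (hprev x hy)
    exact ⟨hx, Fin.forall_fin_succ'.mpr ⟨hpre, (hnext x (hprev x hy)).1.mpr hy⟩⟩

lemma exists_isLeftEnd (hd : CountsSYT d) :
    ∀ {n : ℕ} {s : Fin (n + 1) → YoungDiagram}, IsFinPath s → ∃ a, IsLeftEnd d s a
  | 0, _, hs => ⟨0, isLeftEnd_zero hd hs⟩
  | _ + 1, _, hs =>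
    let ⟨_, ha⟩ := exists_isLeftEnd hd hs.init
    ⟨_, ha.succ hd hs⟩

open MeasureTheory

variable (d)

noncomputable def toPath (x : ℝ) : YoungPathSpace :=
  ⟨fun n => (walk d x n).1, isYoungPath_walk d x⟩

lemma measurable_toPath : Measurable (toPath d) :=
  (measurable_pi_lambda _ fun n => (measurable_walk d n).fst).subtype_mk

lemma measurableSet_cyl {n : ℕ} (s : Fin (n + 1) → YoungDiagram) : MeasurableSet (Cyl s) := by
  have : Cyl s = ⋂ k : Fin (n + 1), (fun T : YoungPathSpace => T.1 k) ⁻¹' {s k} := by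
    ext T
    simp [Cyl]
  rw [this]
  exact .iInter fun k =>
    ((measurable_pi_apply _).comp measurable_subtype_coe) (measurableSet_singleton _)

variable {d}

lemma volume_preimage_cyl (hd : CountsSYT d) {n : ℕ} {s : Fin (n + 1) → YoungDiagram}
    (hs : IsFinPath s) :
    volume (toPath d ⁻¹' Cyl s ∩ Set.Ico 0 1) = (d (s (Fin.last n)) : ℝ≥0∞) / n ! := by
  obtain ⟨a, ha, -⟩ := exists_isLeftEnd hd hs
  have hfact : (0 : ℝ) < n ! := by positivity
  have : toPath d ⁻¹' Cyl s ∩ Set.Ico 0 1 =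
      {x | (x - a) * n ! ∈ Set.Ico 0 (d (s (Fin.last n)) : ℝ)} := by
    ext x
    exact and_comm.trans (ha x)
  rw [this, setOf_sub_mul_mem_Ico hfact, Real.volume_Ico, add_sub_cancel_left,
    ENNReal.ofReal_div_of_pos hfact, ENNReal.ofReal_natCast, ENNReal.ofReal_natCast]

end Plancherel

open MeasureTheory Plancherel

theorem plancherel_measure_exists (d : YoungDiagram → ℕ) (hd : CountsSYT d) :
    ∃ Pl : MeasureTheory.Measure YoungPathSpace,
      MeasureTheory.IsProbabilityMeasure Pl ∧
      ∀ (n : ℕ) (s : Fin (n + 1) → YoungDiagram), IsFinPath s →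
        Pl (Cyl s) = (d (s (Fin.last n)) : ℝ≥0∞) / (n.factorial : ℝ≥0∞) := by
  have : IsProbabilityMeasure (volume.restrict (Set.Ico (0 : ℝ) 1)) := ⟨by simp⟩
  refine ⟨(volume.restrict (Set.Ico 0 1)).map (toPath d),
    Measure.isProbabilityMeasure_map (measurable_toPath d).aemeasurable, fun n s hs => ?_⟩
  rw [Measure.map_apply (measurable_toPath d) (measurableSet_cyl s),
    Measure.restrict_apply (measurable_toPath d (measurableSet_cyl s)), volume_preimage_cyl hd hs]
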